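/- arXiv:2308.12617 — 3 statements merged into one kernel-verified Lean document; each statement's English description precedes it below -/
import Mathlib

section
/- Suppose a DoS attack satisfies the frequency constraint n(τ,t) ≤ η + (t-τ)/τ_D and the duration constraint |Ξ(τ,t)| ≤ κ + (t-τ)/T for all 0 ≤ τ ≤ t, where η, κ ≥ 0, τ_D > 0, T > 1. If 1/T + Δ/τ_D < 1, where Δ > 0 is the sampling period, then the number of successful periodic transmissions T_S(0, kΔ) over [0, kΔ] satisfies T_S(0, kΔ) ≥ (1 - 1/T - Δ/τ_D)k - (κ + ηΔ)/Δ. -/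
open MeasureTheory

/-- Lemma 1: under the DoS frequency and duration constraints, if
`1/T + Δ/τ_D < 1` then the number of successful periodic transmissions over
`[0, kΔ]` satisfies `T_S(0,kΔ) ≥ (1 - 1/T - Δ/τ_D) k - (κ + ηΔ)/Δ`. -/
theorem stmt4 (η κ τD T Δ : ℝ) (hη : 0 ≤ η) (hκ : 0 ≤ κ) (hτD : 0 < τD)
    (hT : 1 < T) (hΔ : 0 < Δ)
    (hq τq : ℕ → ℝ) (hτq : ∀ q, 0 ≤ τq q)
    (Ξ : Set ℝ)
    (hΞ : Ξ = ⋃ q : ℕ, insert (hq q) (Set.Ico (hq q) (hq q + τq q)))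
    (hfreqfin : ∀ τ t : ℝ, 0 ≤ τ → τ ≤ t → {q : ℕ | τ ≤ hq q ∧ hq q ≤ t}.Finite)
    (hfreq : ∀ τ t : ℝ, 0 ≤ τ → τ ≤ t →
      (({q : ℕ | τ ≤ hq q ∧ hq q ≤ t}.ncard : ℝ)) ≤ η + (t - τ) / τD)
    (hdur : ∀ τ t : ℝ, 0 ≤ τ → τ ≤ t →
      (volume (Ξ ∩ Set.Icc τ t)).toReal ≤ κ + (t - τ) / T)
    (hres : 1 / T + Δ / τD < 1) (k : ℕ) :
    (1 - 1 / T - Δ / τD) * k - (κ + η * Δ) / Δ ≤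
      (({j : ℕ | j ≤ k ∧ (j : ℝ) * Δ ∉ Ξ}.ncard : ℝ)) := by
  classical
  have hT0 : (0:ℝ) < T := lt_trans one_pos hT
  have hk0 : (0:ℝ) ≤ (k:ℝ) * Δ := by positivity
  set P : ℕ → Prop := fun j => (j:ℝ) * Δ ∈ Ξ with hP
  set F : Finset ℕ := (Finset.range (k+1)).filter P with hFdef
  set Sf : Finset ℕ := (Finset.range (k+1)).filter (fun j => ¬ P j) with hSdef
  have hScard : {j : ℕ | j ≤ k ∧ (j : ℝ) * Δ ∉ Ξ}.ncard = Sf.card := by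
    rw [← Set.ncard_coe_finset]
    congr 1
    ext j
    simp [hSdef, hP, Nat.lt_succ_iff]
  have hsum : F.card + Sf.card = k + 1 := by
    rw [hFdef, hSdef, Finset.card_filter_add_card_filter_not,
      Finset.card_range]
  set Q : ℕ → Prop := fun j => ∃ q, ((j:ℝ)-1)*Δ < hq q ∧ hq q ≤ (j:ℝ)*Δ with hQ
  set A : Finset ℕ := (F.erase 0).filter Q with hAdef
  set B : Finset ℕ := (F.erase 0) \ A with hBdef
  have hFsub : F ⊆ insert 0 (A ∪ B) := by
    intro j hj
    rcases eq_or_ne j 0 with rfl | hj0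
    · exact Finset.mem_insert_self _ _
    · have hj' : j ∈ F.erase 0 := Finset.mem_erase.mpr ⟨hj0, hj⟩
      by_cases hA : j ∈ A
      · exact Finset.mem_insert_of_mem (Finset.mem_union_left _ hA)
      · exact Finset.mem_insert_of_mem
          (Finset.mem_union_right _ (Finset.mem_sdiff.mpr ⟨hj', hA⟩))
  have hFcard : (F.card : ℝ) ≤ 1 + A.card + B.card := by
    have h1 := Finset.card_le_card hFsub
    have h2 := Finset.card_insert_le 0 (A ∪ B)
    have h3 := Finset.card_union_le A B
    have : F.card ≤ 1 + A.card + B.card := by omega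
    exact_mod_cast this
  -- properties of members of A and B
  have hmemA : ∀ j ∈ A, j ≠ 0 ∧ j ≤ k := by
    intro j hj
    obtain ⟨hje, _⟩ := Finset.mem_filter.mp hj
    obtain ⟨h0, hjF⟩ := Finset.mem_erase.mp hje
    exact ⟨h0, Nat.lt_succ_iff.mp (Finset.mem_range.mp (Finset.mem_filter.mp hjF).1)⟩
  -- bound on A via frequency
  set f : ℕ → ℕ := fun j => if h : Q j then h.choose else 0 with hf
  have hfspec : ∀ j ∈ A, ((j:ℝ)-1)*Δ < hq (f j) ∧ hq (f j) ≤ (j:ℝ)*Δ := by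
    intro j hj
    have hQj : Q j := (Finset.mem_filter.mp hj).2
    simp only [hf, dif_pos hQj]
    exact hQj.choose_spec
  have hinj : Set.InjOn f ↑A := by
    intro i hi j hj hij
    by_contra hne
    have hi' := hfspec i hi
    have hj' := hfspec j hj
    rw [hij] at hi'
    rcases lt_or_gt_of_ne hne with h | h
    · have h1 : ((i:ℝ)+1) ≤ j := by exact_mod_cast h
      have h2 := mul_le_mul_of_nonneg_right h1 hΔ.le
      linarith [hi'.2, hj'.1]
    · have h1 : ((j:ℝ)+1) ≤ i := by exact_mod_cast h
      have h2 := mul_le_mul_of_nonneg_right h1 hΔ.le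
      linarith [hj'.2, hi'.1]
  have hfin := hfreqfin 0 ((k:ℝ)*Δ) le_rfl hk0
  have hAcard : (A.card : ℝ) ≤ η + ((k:ℝ)*Δ - 0)/τD := by
    have hmap : A.image f ⊆ hfin.toFinset := by
      intro q hq'
      rcases Finset.mem_image.mp hq' with ⟨j, hj, rfl⟩
      have h1 := hfspec j hj
      have hjk := hmemA j hj
      have h2 : (1:ℝ) ≤ j := by exact_mod_cast Nat.one_le_iff_ne_zero.mpr hjk.1
      have h3 : (j:ℝ) ≤ k := by exact_mod_cast hjk.2
      have h4 := mul_le_mul_of_nonneg_right h3 hΔ.le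
      have h5 : (0:ℝ) ≤ ((j:ℝ)-1)*Δ := mul_nonneg (by linarith) hΔ.le
      simp only [Set.Finite.mem_toFinset, Set.mem_setOf_eq]
      exact ⟨by linarith [h1.1], by linarith [h1.2]⟩
    have hle := Finset.card_le_card hmap
    rw [Finset.card_image_of_injOn hinj] at hle
    have hQcard := hfreq 0 ((k:ℝ)*Δ) le_rfl hk0
    rw [Set.ncard_eq_toFinset_card _ hfin] at hQcard
    calc (A.card:ℝ) ≤ hfin.toFinset.card := by exact_mod_cast hle
      _ ≤ η + ((k:ℝ)*Δ - 0)/τD := hQcard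
  -- bound on B via duration
  have hBsub : ∀ j ∈ B, Set.Ico (((j:ℝ)-1)*Δ) ((j:ℝ)*Δ) ⊆ Ξ ∩ Set.Icc 0 ((k:ℝ)*Δ) := by
    intro j hj
    obtain ⟨hjF, hjA⟩ := Finset.mem_sdiff.mp hj
    have hnQ : ¬ Q j := fun h => hjA (Finset.mem_filter.mpr ⟨hjF, h⟩)
    simp only [hQ] at hnQ
    obtain ⟨hj0, hjF'⟩ := Finset.mem_erase.mp hjF
    obtain ⟨hjr, hjΞ⟩ := Finset.mem_filter.mp hjF'
    have hjk' : (j:ℝ) ≤ k := by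
      exact_mod_cast Nat.lt_succ_iff.mp (Finset.mem_range.mp hjr)
    have hj1' : (1:ℝ) ≤ j := by exact_mod_cast Nat.one_le_iff_ne_zero.mpr hj0
    have hjΞ' : (j:ℝ)*Δ ∈ Ξ := hjΞ
    rw [hΞ] at hjΞ'
    obtain ⟨q, hmem⟩ := Set.mem_iUnion.mp hjΞ'
    rcases Set.mem_insert_iff.mp hmem with heq | hIco
    · exfalso
      exact hnQ ⟨q, by rw [← heq]; nlinarith, by rw [← heq]⟩
    · push_neg at hnQ
      have hle : hq q ≤ ((j:ℝ)-1)*Δ := by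
        by_contra hcon
        push_neg at hcon
        have := hnQ q hcon
        linarith [hIco.1]
      intro x hx
      refine ⟨?_, ?_, ?_⟩
      · rw [hΞ]
        exact Set.mem_iUnion.mpr ⟨q, Set.mem_insert_of_mem _
          ⟨le_trans hle hx.1, lt_trans hx.2 hIco.2⟩⟩
      · have h5 : (0:ℝ) ≤ ((j:ℝ)-1)*Δ := mul_nonneg (by linarith) hΔ.le
        linarith [hx.1]
      · have h4 := mul_le_mul_of_nonneg_right hjk' hΔ.le
        linarith [hx.2]
  have hdisj : (↑B : Set ℕ).PairwiseDisjoint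
      (fun j : ℕ => Set.Ico (((j:ℝ)-1)*Δ) ((j:ℝ)*Δ)) := by
    intro i _ j _ hij
    rw [Function.onFun, Set.disjoint_left]
    rintro x ⟨h1, h2⟩ ⟨h3, h4⟩
    rcases lt_or_gt_of_ne hij with h | h
    · have h5 : ((i:ℝ)+1) ≤ j := by exact_mod_cast h
      have h6 := mul_le_mul_of_nonneg_right h5 hΔ.le
      linarith
    · have h5 : ((j:ℝ)+1) ≤ i := by exact_mod_cast h
      have h6 := mul_le_mul_of_nonneg_right h5 hΔ.le
      linarith
  have hmeas : (B.card : ENNReal) * ENNReal.ofReal Δ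
      ≤ volume (Ξ ∩ Set.Icc 0 ((k:ℝ)*Δ)) := by
    have h1 : volume (⋃ j ∈ B, Set.Ico (((j:ℝ)-1)*Δ) ((j:ℝ)*Δ))
        = ∑ j ∈ B, volume (Set.Ico (((j:ℝ)-1)*Δ) ((j:ℝ)*Δ)) :=
      measure_biUnion_finset hdisj (fun _ _ => measurableSet_Ico)
    have h2 : ∀ j ∈ B, volume (Set.Ico (((j:ℝ)-1)*Δ) ((j:ℝ)*Δ))
        = ENNReal.ofReal Δ := by
      intro j _
      rw [Real.volume_Ico]
      congr 1
      ring
    rw [Finset.sum_congr rfl h2, Finset.sum_const, nsmul_eq_mul] at h1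
    rw [← h1]
    exact measure_mono (Set.iUnion₂_subset hBsub)
  have hvol_ne : volume (Ξ ∩ Set.Icc 0 ((k:ℝ)*Δ)) ≠ ⊤ :=
    ne_top_of_le_ne_top (by rw [Real.volume_Icc]; exact ENNReal.ofReal_ne_top)
      (measure_mono Set.inter_subset_right)
  have hBcard : (B.card : ℝ) * Δ ≤ κ + ((k:ℝ)*Δ - 0)/T := by
    have h1 := ENNReal.toReal_mono hvol_ne hmeas
    rw [ENNReal.toReal_mul, ENNReal.toReal_ofReal hΔ.le,
      ENNReal.toReal_natCast] at h1
    exact le_trans h1 (hdur 0 ((k:ℝ)*Δ) le_rfl hk0)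
  -- conclude
  rw [hScard]
  have hsum' : (F.card : ℝ) + Sf.card = (k:ℝ) + 1 := by exact_mod_cast hsum
  have hBc : (B.card:ℝ) ≤ κ/Δ + (k:ℝ)/T := by
    have h1 : κ + ((k:ℝ)*Δ - 0)/T = (κ/Δ + (k:ℝ)/T) * Δ := by
      field_simp
      ring
    rw [h1] at hBcard
    exact le_of_mul_le_mul_right hBcard hΔ
  have hAc : (A.card:ℝ) ≤ η + (k:ℝ)*Δ/τD := by rw [sub_zero] at hAcard; exact hAcard
  have hgoal : (1 - 1/T - Δ/τD)*(k:ℝ) - (κ + η*Δ)/Δ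
      = (k:ℝ) - (k:ℝ)/T - (k:ℝ)*Δ/τD - κ/Δ - η := by
    field_simp
    ring
  rw [hgoal]
  linarith
end

section
/- Let L be the Laplacian of a connected undirected weighted graph on N vertices and A₀ a diagonal matrix with nonnegative entries, not all zero on each block appropriately (as constructed from adjacency weights a_{ij}). Define H = I - h(L ⊗ I_N + A₀) with diagonal entries of L ⊗ I_N + A₀ bounded. If 0 < h < min_{i,j} 1/(Σ_l a_{il} + a_{ij}), then H is symmetric and all eigenvalues of H lie strictly within the unit circle, so ‖H‖ = ρ(H) < 1. -/
/-- The weighted graph Laplacian `L` with `L i i = ∑ l, a i l` and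
`L i j = -a i j` for `i ≠ j`. -/
noncomputable def Lap (N : ℕ) (a : Fin N → Fin N → ℝ) : Matrix (Fin N) (Fin N) ℝ :=
  fun i j => if i = j then ∑ l, a i l else -(a i j)

/-- The matrix `H = I_{N²} - h (L ⊗ I_N + A₀)`, where
`A₀ = diag[a₁₁, …, a₁N, a₂₁, …, a_NN]`. -/
noncomputable def Hof (N : ℕ) (a : Fin N → Fin N → ℝ) (h : ℝ) :
    Matrix (Fin N × Fin N) (Fin N × Fin N) ℝ :=
  1 - h • (Matrix.kroneckerMap (· * ·) (Lap N a) (1 : Matrix (Fin N) (Fin N) ℝ)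
      + Matrix.diagonal (fun p => a p.1 p.2))

/-!
Grouping the index pairs `(i, j)` by `j` exhibits `H` as block diagonal, with blocks
`1 - h (L + D_j)` where `D_j = diag (a_{1j}, …, a_{Nj})`. The quadratic form of `L + D_j` is
`½ ∑_{i,k} a_ik (y_i - y_k)² + ∑_i (a_ii + a_ij) y_i²`. It is positive for `y ≠ 0`, since by
connectivity it can only vanish on constant vectors and vertex `j` has a neighbour; and it is
below `(2 / h) ‖y‖²`, since `h (2 ∑_l a_il + a_ii + a_ij) < 2`. Hence `|yᵀ H y| < ‖y‖²` for
`y ≠ 0`, which confines the eigenvalues of the symmetric matrix `H` to `(-1, 1)`; for a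
self-adjoint operator the norm is the spectral radius.
-/

open Matrix

namespace Matrix

theorem dotProduct_diagonal_mulVec {n R : Type*} [Fintype n] [DecidableEq n] [CommSemiring R]
    (d y : n → R) : y ⬝ᵥ diagonal d *ᵥ y = ∑ i, d i * y i ^ 2 := by
  simp only [dotProduct, mulVec_diagonal]
  exact Finset.sum_congr rfl fun i _ => by ring

theorem dotProduct_blockDiagonal_mulVec {m o R : Type*} [Fintype m] [Fintype o] [DecidableEq o]
    [CommSemiring R] (B : o → Matrix m m R) (x : m × o → R) :
    x ⬝ᵥ blockDiagonal B *ᵥ x = ∑ k, (fun i => x (i, k)) ⬝ᵥ B k *ᵥ fun i => x (i, k) := by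
  simp only [dotProduct, mulVec, Fintype.sum_prod_type, blockDiagonal_apply, ite_mul, zero_mul,
    Finset.sum_ite_eq, Finset.mem_univ, if_true]
  rw [Finset.sum_comm]

theorem abs_dotProduct_blockDiagonal_mulVec_lt {m o : Type*} [Fintype m] [Fintype o]
    [DecidableEq m] [DecidableEq o] {B : o → Matrix m m ℝ}
    (hB : ∀ k, ∀ y ≠ 0, |y ⬝ᵥ B k *ᵥ y| < y ⬝ᵥ y) {x : m × o → ℝ} (hx : x ≠ 0) :
    |x ⬝ᵥ blockDiagonal B *ᵥ x| < x ⬝ᵥ x := by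
  have hle : ∀ k y, |y ⬝ᵥ B k *ᵥ y| ≤ y ⬝ᵥ y := fun k y => by
    rcases eq_or_ne y 0 with rfl | hy
    · simp
    · exact (hB k y hy).le
  obtain ⟨⟨i, k⟩, hik⟩ := Function.ne_iff.mp hx
  have hcol : (fun i => x (i, k)) ≠ 0 := Function.ne_iff.mpr ⟨i, hik⟩
  have hxx : x ⬝ᵥ x = ∑ k, (fun i => x (i, k)) ⬝ᵥ fun i => x (i, k) := by
    simpa [blockDiagonal_one] using dotProduct_blockDiagonal_mulVec (1 : o → Matrix m m ℝ) x
  rw [dotProduct_blockDiagonal_mulVec, hxx]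
  exact (Finset.abs_sum_le_sum_abs _ _).trans_lt
    (Finset.sum_lt_sum (fun k _ => hle k _) ⟨k, Finset.mem_univ _, hB k _ hcol⟩)

variable {n : Type*} [Fintype n] [DecidableEq n]

theorem abs_dotProduct_one_sub_smul_mulVec_lt {C : Matrix n n ℝ} {h : ℝ} (hh : 0 < h)
    (hpos : ∀ y ≠ 0, 0 < y ⬝ᵥ C *ᵥ y) (hlt : ∀ y ≠ 0, h * (y ⬝ᵥ C *ᵥ y) < 2 * (y ⬝ᵥ y))
    {y : n → ℝ} (hy : y ≠ 0) : |y ⬝ᵥ (1 - h • C) *ᵥ y| < y ⬝ᵥ y := by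
  rw [sub_mulVec, one_mulVec, smul_mulVec, dotProduct_sub, dotProduct_smul, smul_eq_mul, abs_lt]
  have := mul_pos hh (hpos y hy)
  constructor <;> linarith [hlt y hy]

theorem abs_lt_one_of_mem_spectrum {A : Matrix n n ℝ}
    (hA : ∀ x ≠ 0, |x ⬝ᵥ A *ᵥ x| < x ⬝ᵥ x) {μ : ℝ} (hμ : μ ∈ spectrum ℝ A) : |μ| < 1 := by
  rw [← spectrum_toLin', ← Module.End.hasEigenvalue_iff_mem_spectrum] at hμ
  obtain ⟨v, hv⟩ := hμ.exists_hasEigenvector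
  have hAv : A *ᵥ v = μ • v := by simpa using hv.apply_eq_smul
  have hvv : 0 < v ⬝ᵥ v := by simpa using dotProduct_self_star_pos_iff.mpr hv.2
  have := hA v hv.2
  rw [hAv, dotProduct_smul, smul_eq_mul, abs_mul, abs_of_pos hvv] at this
  exact (mul_lt_iff_lt_one_left hvv).mp this

theorem norm_toEuclideanCLM_lt_one {A : Matrix n n ℝ} (hA : A.IsHermitian)
    (hσ : ∀ μ ∈ spectrum ℝ A, |μ| < 1) : ‖toEuclideanCLM (𝕜 := ℝ) A‖ < 1 := by
  have hT : IsSelfAdjoint (toEuclideanCLM (𝕜 := ℝ) A) := hA.isSelfAdjoint.map _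
  have hspec : spectrum ℝ (toEuclideanCLM (𝕜 := ℝ) A) = spectrum ℝ A :=
    AlgEquiv.spectrum_eq (toEuclideanCLM (n := n) (𝕜 := ℝ)).toAlgEquiv A
  have hρ : spectralRadius ℝ (toEuclideanCLM (𝕜 := ℝ) A) < (1 : NNReal) := by
    rcases (spectrum ℝ (toEuclideanCLM (𝕜 := ℝ) A)).eq_empty_or_nonempty with hempty | hne
    · simp [spectralRadius, hempty]
    · refine spectrum.spectralRadius_lt_of_forall_lt_of_nonempty hne fun μ hμ => ?_
      rw [hspec] at hμ
      simpa [← NNReal.coe_lt_coe] using hσ μ hμ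
  rw [(toEuclideanCLM (𝕜 := ℝ) A).spectralRadius_eq_nnnorm hT] at hρ
  exact_mod_cast hρ

end Matrix

section Laplacian

variable {N : ℕ} {a : Fin N → Fin N → ℝ}

def IsWeightConnected (a : Fin N → Fin N → ℝ) : Prop :=
  ∀ i j : Fin N, i ≠ j → ∃ (m : ℕ) (p : Fin (m + 1) → Fin N),
    p 0 = i ∧ p (Fin.last m) = j ∧ ∀ q : Fin m, 0 < a (p q.castSucc) (p q.succ)

theorem IsWeightConnected.apply_eq {α : Type*} (hconn : IsWeightConnected a) {f : Fin N → α}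
    (hf : ∀ i k, 0 < a i k → f i = f k) (i k : Fin N) : f i = f k := by
  rcases eq_or_ne i k with rfl | hik
  · rfl
  obtain ⟨m, p, rfl, rfl, hpos⟩ := hconn i k hik
  have hpath : ∀ q : Fin (m + 1), f (p 0) = f (p q) := fun q => by
    induction q using Fin.induction with
    | zero => rfl
    | succ q ih => rw [ih, hf _ _ (hpos q)]
  exact hpath _

theorem sum_sum_mul_eq_of_symm (hsym : ∀ i j, a i j = a j i) (g : Fin N → ℝ) :
    ∑ i, ∑ k, a i k * g k = ∑ i, ∑ k, a i k * g i := by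
  rw [Finset.sum_comm]
  simp_rw [hsym]

theorem isSymm_Lap (hsym : ∀ i j, a i j = a j i) : (Lap N a).IsSymm := by
  ext i k
  by_cases hik : i = k
  · subst hik; rfl
  · simp [Lap, hik, Ne.symm hik, hsym i k]

theorem Lap_eq_diagonal_sub : Lap N a = diagonal (fun i => ∑ l, a i l + a i i) - of a := by
  ext i k
  by_cases hik : i = k
  · subst hik; simp [Lap]
  · simp [Lap, hik]

theorem dotProduct_Lap_mulVec (hsym : ∀ i j, a i j = a j i) (y : Fin N → ℝ) :
    y ⬝ᵥ Lap N a *ᵥ y = 2⁻¹ * ∑ i, ∑ k, a i k * (y i - y k) ^ 2 + ∑ i, a i i * y i ^ 2 := by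
  have hswap : ∑ i, ∑ k, (a i k * y k ^ 2 - a i k * y i ^ 2) = 0 := by
    simp only [Finset.sum_sub_distrib, sum_sum_mul_eq_of_symm hsym, sub_self]
  have hsq : ∑ i, ∑ k, a i k * (y i - y k) ^ 2 =
      2 * ∑ i, ∑ k, (a i k * y i ^ 2 - a i k * y i * y k) := by
    rw [← add_zero (2 * _), ← hswap, Finset.mul_sum, ← Finset.sum_add_distrib]
    refine Finset.sum_congr rfl fun i _ => ?_
    rw [Finset.mul_sum, ← Finset.sum_add_distrib]
    exact Finset.sum_congr rfl fun k _ => by ring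
  rw [hsq, inv_mul_cancel_left₀ two_ne_zero, Lap_eq_diagonal_sub, sub_mulVec, dotProduct_sub]
  simp only [dotProduct, mulVec_diagonal]
  simp only [mulVec, dotProduct, of_apply, ← Finset.sum_sub_distrib, ← Finset.sum_add_distrib]
  refine Finset.sum_congr rfl fun i _ => ?_
  rw [Finset.sum_sub_distrib, ← Finset.sum_mul, Finset.mul_sum,
    Finset.sum_congr rfl fun k _ => show a i k * y i * y k = y i * (a i k * y k) by ring]
  ring

theorem dotProduct_Lap_mulVec_le (hsym : ∀ i j, a i j = a j i) (hnn : ∀ i j, 0 ≤ a i j)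
    (y : Fin N → ℝ) : y ⬝ᵥ Lap N a *ᵥ y ≤ ∑ i, (2 * ∑ l, a i l + a i i) * y i ^ 2 := by
  have hterm : ∀ i k, a i k * (y i - y k) ^ 2 ≤ 2 * (a i k * y i ^ 2) + 2 * (a i k * y k ^ 2) :=
    fun i k => by nlinarith [mul_nonneg (hnn i k) (sq_nonneg (y i + y k))]
  have hsum := Finset.sum_le_sum fun i (_ : i ∈ Finset.univ) =>
    Finset.sum_le_sum fun k (_ : k ∈ Finset.univ) => hterm i k
  simp only [Finset.sum_add_distrib, ← Finset.mul_sum, sum_sum_mul_eq_of_symm hsym] at hsum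
  rw [dotProduct_Lap_mulVec hsym]
  simp only [add_mul, Finset.sum_add_distrib, Finset.sum_mul, mul_assoc, ← Finset.mul_sum]
  linarith

theorem dotProduct_Lap_add_diagonal_mulVec_pos (hsym : ∀ i j, a i j = a j i)
    (hnn : ∀ i j, 0 ≤ a i j) (hconn : IsWeightConnected a) {d : Fin N → ℝ} (hd : 0 ≤ d)
    {k : Fin N} (hk : 0 < d k) {y : Fin N → ℝ} (hy : y ≠ 0) :
    0 < y ⬝ᵥ (Lap N a + diagonal d) *ᵥ y := by
  rw [add_mulVec, dotProduct_add, dotProduct_Lap_mulVec hsym, dotProduct_diagonal_mulVec]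
  have hE : ∀ i k, 0 ≤ a i k * (y i - y k) ^ 2 := fun i k => mul_nonneg (hnn i k) (sq_nonneg _)
  have hD : ∀ i, 0 ≤ d i * y i ^ 2 := fun i => mul_nonneg (hd i) (sq_nonneg _)
  have hErow : ∀ i, 0 ≤ ∑ k, a i k * (y i - y k) ^ 2 := fun i => Finset.sum_nonneg fun k _ => hE i k
  have hEsum : 0 ≤ ∑ i, ∑ k, a i k * (y i - y k) ^ 2 := Finset.sum_nonneg fun i _ => hErow i
  have hDsum : 0 ≤ ∑ i, d i * y i ^ 2 := Finset.sum_nonneg fun i _ => hD i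
  have hA : 0 ≤ ∑ i, a i i * y i ^ 2 :=
    Finset.sum_nonneg fun i _ => mul_nonneg (hnn i i) (sq_nonneg _)
  by_contra! hq
  have hconst : ∀ i l, y i = y l := hconn.apply_eq fun i l hil => by
    have hle : a i l * (y i - y l) ^ 2 ≤ ∑ i, ∑ k, a i k * (y i - y k) ^ 2 :=
      (Finset.single_le_sum (fun l _ => hE i l) (Finset.mem_univ l)).trans
        (Finset.single_le_sum (fun i _ => hErow i) (Finset.mem_univ i))
    have hsq : (y i - y l) ^ 2 ≤ 0 := le_of_mul_le_mul_left (by linarith) hil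
    exact sub_eq_zero.mp (pow_eq_zero_iff two_ne_zero |>.mp (le_antisymm hsq (sq_nonneg _)))
  have hyk : y k = 0 := by
    have hle := Finset.single_le_sum (fun i _ => hD i) (Finset.mem_univ k)
    have hsq : y k ^ 2 ≤ 0 := le_of_mul_le_mul_left (by linarith) hk
    exact pow_eq_zero_iff two_ne_zero |>.mp (le_antisymm hsq (sq_nonneg _))
  exact hy (funext fun i => (hconst i k).trans hyk)

theorem mul_dotProduct_Lap_add_diagonal_mulVec_lt (hsym : ∀ i j, a i j = a j i)
    (hnn : ∀ i j, 0 ≤ a i j) {d : Fin N → ℝ} {h : ℝ} (hh : 0 ≤ h)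
    (hcoef : ∀ i, h * (2 * ∑ l, a i l + a i i + d i) < 2) {y : Fin N → ℝ} (hy : y ≠ 0) :
    h * (y ⬝ᵥ (Lap N a + diagonal d) *ᵥ y) < 2 * (y ⬝ᵥ y) := by
  have hle : y ⬝ᵥ (Lap N a + diagonal d) *ᵥ y ≤
      ∑ i, (2 * ∑ l, a i l + a i i + d i) * y i ^ 2 := by
    have := dotProduct_Lap_mulVec_le hsym hnn y
    rw [add_mulVec, dotProduct_add, dotProduct_diagonal_mulVec]
    simp only [add_mul _ (d _), Finset.sum_add_distrib]
    linarith
  obtain ⟨i, hi⟩ := Function.ne_iff.mp hy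
  calc h * (y ⬝ᵥ (Lap N a + diagonal d) *ᵥ y)
      ≤ h * ∑ i, (2 * ∑ l, a i l + a i i + d i) * y i ^ 2 := mul_le_mul_of_nonneg_left hle hh
    _ = ∑ i, h * (2 * ∑ l, a i l + a i i + d i) * y i ^ 2 := by
      simp only [Finset.mul_sum, mul_assoc]
    _ < ∑ i, 2 * y i ^ 2 :=
      Finset.sum_lt_sum (fun i _ => mul_le_mul_of_nonneg_right (hcoef i).le (sq_nonneg _))
        ⟨i, Finset.mem_univ _, mul_lt_mul_of_pos_right (hcoef i) (sq_pos_of_ne_zero hi)⟩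
    _ = 2 * (y ⬝ᵥ y) := by simp only [dotProduct, Finset.mul_sum, sq]

theorem Hof_eq_blockDiagonal (h : ℝ) :
    Hof N a h = blockDiagonal fun j => 1 - h • (Lap N a + diagonal fun i => a i j) := by
  ext ⟨i, j⟩ ⟨k, l⟩
  by_cases hjl : j = l
  · subst hjl
    by_cases hik : i = k
    · subst hik; simp [Hof, blockDiagonal_apply, one_apply]
    · simp [Hof, blockDiagonal_apply, one_apply, hik]
  · simp [Hof, blockDiagonal_apply, one_apply, hjl]

theorem isSymm_Hof (hsym : ∀ i j, a i j = a j i) (h : ℝ) : (Hof N a h).IsSymm := by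
  rw [Hof_eq_blockDiagonal, IsSymm, blockDiagonal_transpose]
  congr 1
  funext j
  exact isSymm_one.sub (((isSymm_Lap hsym).add (isSymm_diagonal _)).smul h)

theorem abs_dotProduct_Hof_mulVec_lt (hsym : ∀ i j, a i j = a j i) (hnn : ∀ i j, 0 ≤ a i j)
    (hconn : IsWeightConnected a) {h : ℝ} (hh0 : 0 < h)
    (hh : ∀ i j, h < 1 / ((∑ l, a i l) + a i j)) {x : Fin N × Fin N → ℝ} (hx : x ≠ 0) :
    |x ⬝ᵥ Hof N a h *ᵥ x| < x ⬝ᵥ x := by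
  -- with the convention `1 / 0 = 0`, the hypothesis `hh` also forces the denominators positive
  have hpos : ∀ i j, 0 < ∑ l, a i l + a i j := fun i j => by
    by_contra! hs
    exact hh0.not_gt ((hh i j).trans_le (one_div_nonpos.mpr hs))
  have hcoef : ∀ i j, h * (∑ l, a i l + a i j) < 1 := fun i j =>
    (lt_div_iff₀ (hpos i j)).mp (hh i j)
  have hnbr : ∀ j, ∃ k, 0 < a k j := fun j => by
    by_contra! hj
    have : ∑ l, a j l ≤ 0 := Finset.sum_nonpos fun l _ => hsym j l ▸ hj l
    linarith [hpos j j, hj j]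
  rw [Hof_eq_blockDiagonal]
  refine abs_dotProduct_blockDiagonal_mulVec_lt (fun j y hy => ?_) hx
  obtain ⟨k, hk⟩ := hnbr j
  exact abs_dotProduct_one_sub_smul_mulVec_lt hh0
    (fun y hy => dotProduct_Lap_add_diagonal_mulVec_pos hsym hnn hconn (fun i => hnn i j) hk hy)
    (fun y hy => mul_dotProduct_Lap_add_diagonal_mulVec_lt hsym hnn hh0.le
      (fun i => by linarith [hcoef i i, hcoef i j]) hy) hy

end Laplacian

theorem stmt6_general (N : ℕ) (a : Fin N → Fin N → ℝ)
    (hsym : ∀ i j, a i j = a j i) (hnn : ∀ i j, 0 ≤ a i j)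
    (hconn : ∀ i j : Fin N, i ≠ j → ∃ (m : ℕ) (p : Fin (m + 1) → Fin N),
      p 0 = i ∧ p (Fin.last m) = j ∧
      ∀ q : Fin m, 0 < a (p q.castSucc) (p q.succ))
    (h : ℝ) (hh0 : 0 < h)
    (hh : ∀ i j : Fin N, h < 1 / ((∑ l, a i l) + a i j)) :
    (Hof N a h).IsSymm ∧
    (∀ μ ∈ spectrum ℝ (Hof N a h), |μ| < 1) ∧
    ‖Matrix.toEuclideanCLM (𝕜 := ℝ) (Hof N a h)‖ < 1 := by
  have hquad : ∀ x ≠ 0, |x ⬝ᵥ Hof N a h *ᵥ x| < x ⬝ᵥ x := fun _ hx =>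
    abs_dotProduct_Hof_mulVec_lt hsym hnn hconn hh0 hh hx
  have hspec : ∀ μ ∈ spectrum ℝ (Hof N a h), |μ| < 1 := fun _ =>
    abs_lt_one_of_mem_spectrum hquad
  exact ⟨isSymm_Hof hsym h, hspec,
    norm_toEuclideanCLM_lt_one (isHermitian_iff_isSymm.mpr (isSymm_Hof hsym h)) hspec⟩

/-- If the graph is undirected (symmetric nonnegative weights, zero diagonal) and
connected, and `0 < h < min_{i,j} 1/(∑_l a_{il} + a_{ij})`, then
`H = I - h(L ⊗ I_N + A₀)` is symmetric, all its eigenvalues lie strictly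
inside the unit circle, and `‖H‖ = ρ(H) < 1`. -/
theorem stmt6 (N : ℕ) (hN : 0 < N) (a : Fin N → Fin N → ℝ)
    (hsym : ∀ i j, a i j = a j i) (hnn : ∀ i j, 0 ≤ a i j)
    (hdiag : ∀ i, a i i = 0)
    (hconn : ∀ i j : Fin N, i ≠ j → ∃ (m : ℕ) (p : Fin (m + 1) → Fin N),
      p 0 = i ∧ p (Fin.last m) = j ∧
      ∀ q : Fin m, 0 < a (p q.castSucc) (p q.succ))
    (h : ℝ) (hh0 : 0 < h)
    (hh : ∀ i j : Fin N, h < 1 / ((∑ l, a i l) + a i j)) :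
    (Hof N a h).IsSymm ∧
    (∀ μ ∈ spectrum ℝ (Hof N a h), |μ| < 1) ∧
    ‖Matrix.toEuclideanCLM (𝕜 := ℝ) (Hof N a h)‖ < 1 :=
  stmt6_general N a hsym hnn hconn h hh0 hh
end

section
/- Let H̄ be the 2×2 real matrix [[a + δc₁, δc₂], [δc₂, √(1 - 2δμ + δ²l²)]] where a = ‖H‖ < 1, c₁ = l√N, c₂ = lN, 0 < μ ≤ l, N ≥ 1. Then there exists δ* > 0 such that for all 0 < δ < δ*, the spectral radius ρ(H̄) < 1. -/
lemma spec_fin_two (p q r z : ℝ) (hz : z ∈ spectrum ℝ (!![p, r; r, q])) :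
    (z - p) * (z - q) - r * r = 0 := by
  rw [spectrum.mem_iff] at hz
  by_contra h
  apply hz
  rw [Matrix.isUnit_iff_isUnit_det, isUnit_iff_ne_zero]
  have : algebraMap ℝ (Matrix (Fin 2) (Fin 2) ℝ) z - !![p, r; r, q]
      = !![z - p, -r; -r, z - q] := by
    ext i j
    fin_cases i <;> fin_cases j <;>
      simp [Matrix.algebraMap_matrix_apply]
  rw [this, Matrix.det_fin_two_of]
  intro hc
  apply h
  nlinarith [hc]

set_option maxHeartbeats 1000000 in
/-- For `H̄(δ) = [[a + δl√N, δlN], [δlN, √(1 - 2δμ + δ²l²)]]` with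
`0 ≤ a = ‖H‖ < 1`, `0 < μ ≤ l`, `N ≥ 1`, there exists `δ* > 0` such that for
all `0 < δ < δ*` the spectral radius of `H̄(δ)` is less than `1`
(all eigenvalues have modulus `< 1`). -/
theorem stmt7 (N : ℕ) (hN : 1 ≤ N) (a μ l : ℝ) (ha0 : 0 ≤ a) (ha : a < 1)
    (hμ : 0 < μ) (hμl : μ ≤ l) :
    ∃ δs : ℝ, 0 < δs ∧ ∀ δ : ℝ, 0 < δ → δ < δs →
      ∀ z ∈ spectrum ℝ
        (!![a + δ * (l * Real.sqrt N), δ * (l * N);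
            δ * (l * N), Real.sqrt (1 - 2 * δ * μ + δ ^ 2 * l ^ 2)]),
        |z| < 1 := by
  have hl : 0 < l := lt_of_lt_of_le hμ hμl
  have hN1 : (1:ℝ) ≤ (N:ℝ) := by exact_mod_cast hN
  have hNpos : (0:ℝ) < (N:ℝ) := by linarith
  have ha1 : 0 < 1 - a := by linarith
  set c₁ : ℝ := l * Real.sqrt N with hc₁def
  set c₂ : ℝ := l * N with hc₂def
  have hsq : 0 < Real.sqrt N := Real.sqrt_pos.2 hNpos
  have hc₁ : 0 < c₁ := by positivity
  have hc₂ : 0 < c₂ := by positivity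
  refine ⟨min (min (μ / l ^ 2) ((1 - a) / (2 * c₁))) ((1 - a) * μ / (4 * c₂ ^ 2)),
    by positivity, ?_⟩
  intro δ hδ0 hδs z hz
  have h1 : δ < μ / l ^ 2 := lt_of_lt_of_le hδs (le_trans (min_le_left _ _) (min_le_left _ _))
  have h2 : δ < (1 - a) / (2 * c₁) := lt_of_lt_of_le hδs (le_trans (min_le_left _ _) (min_le_right _ _))
  have h3 : δ < (1 - a) * μ / (4 * c₂ ^ 2) := lt_of_lt_of_le hδs (min_le_right _ _)
  have hδl2 : δ * l ^ 2 < μ := by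
    have := (lt_div_iff₀ (by positivity : (0:ℝ) < l ^ 2)).1 h1; linarith
  have hδc₁ : 2 * (δ * c₁) < 1 - a := by
    have := (lt_div_iff₀ (by positivity : (0:ℝ) < 2 * c₁)).1 h2; linarith
  have hδc₂ : 4 * (δ * c₂ ^ 2) < (1 - a) * μ := by
    have := (lt_div_iff₀ (by positivity : (0:ℝ) < 4 * c₂ ^ 2)).1 h3; linarith
  set p : ℝ := a + δ * c₁ with hpdef
  set b2 : ℝ := 1 - 2 * δ * μ + δ ^ 2 * l ^ 2 with hb2def
  have hb2nonneg : 0 ≤ b2 := by nlinarith [sq_nonneg (δ * l ^ 2 - μ), sq_nonneg l]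
  set q : ℝ := Real.sqrt b2 with hqdef
  have hq0 : 0 ≤ q := Real.sqrt_nonneg _
  have hq2 : q ^ 2 = b2 := Real.sq_sqrt hb2nonneg
  have hb2lt1 : b2 < 1 := by nlinarith
  have hq1 : q < 1 := by
    rw [hqdef, show (1:ℝ) = Real.sqrt 1 by simp]
    exact Real.sqrt_lt_sqrt hb2nonneg hb2lt1
  have hqlb : δ * μ / 2 ≤ 1 - q := by nlinarith
  have hp0 : 0 ≤ p := by positivity
  have hp1 : p < 1 := by simp only [hpdef]; linarith
  have hp1' : (1 - a) / 2 ≤ 1 - p := by simp only [hpdef]; linarith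
  have hdet1 : (δ * c₂) * (δ * c₂) < (1 - p) * (1 - q) := by
    have h4 : (1 - a) / 2 * (δ * μ / 2) ≤ (1 - p) * (1 - q) := by
      apply mul_le_mul hp1' hqlb (by positivity) (by linarith)
    nlinarith
  have e1 : (1 - p) * (1 - q) ≤ 1 :=
    mul_le_one₀ (by linarith) (by linarith) (by linarith)
  have e2 : (1:ℝ) ≤ (1 + p) * (1 + q) := by nlinarith [mul_nonneg hp0 hq0]
  have hdetm1 : (δ * c₂) * (δ * c₂) < (1 + p) * (1 + q) := by linarith
  have hchar := spec_fin_two p q (δ * c₂) z hz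
  rw [abs_lt]
  constructor
  · by_contra h
    push_neg at h
    nlinarith [hchar, hdetm1]
  · by_contra h
    push_neg at h
    nlinarith [hchar, hdet1]
end
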